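/- arXiv:1211.2750 — 4 statements merged into one kernel-verified Lean document; each statement's English description precedes it below -/
import Mathlib

section
/- Let a < b, let h be a nonnegative function on an interval J ⊇ [0,1] which is symmetric about 1/2, i.e. h(t) = h(1-t) for all t ∈ [0,1], and let f, g : [a,b] → ℝ be positive h-logarithmically convex functions such that the product fg is integrable on [a,b] and the function t ↦ [f(a)g(a)·f(b)g(b)]^{h(t)} is integrable on [0,1]. Then (1/(b-a)) ∫_a^b f(x)g(x) dx ≤ ∫_0^1 [f(a)g(a)·f(b)g(b)]^{h(t)} dt. -/
open Set MeasureTheory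

/-! The product of two nonnegative `h`-log-convex functions is again `h`-log-convex, so it
suffices to treat a single function `F`. Substituting `x = t a + (1 - t) b` turns the mean of
`F` over `[a, b]` into `∫₀¹ F (t a + (1 - t) b) dt`, and the symmetry `h t = h (1 - t)` merges the
bound `F a ^ h t * F b ^ h (1 - t)` into `(F a * F b) ^ h t`. -/

section ChangeOfVariables

variable {E : Type*} [NormedAddCommGroup E]

theorem intervalIntegral.integral_eq_sub_smul_integral_unitInterval [NormedSpace ℝ E]
    [CompleteSpace E] (F : ℝ → E) (a b : ℝ) :
    ∫ x in a..b, F x = (b - a) • ∫ t in (0:ℝ)..1, F (t * a + (1 - t) * b) := by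
  have key := intervalIntegral.smul_integral_comp_mul_add (a := 0) (b := 1) F (a - b) b
  simp only [mul_zero, zero_add, mul_one, sub_add_cancel] at key
  rw [intervalIntegral.integral_symm, ← key, ← neg_smul, neg_sub]
  congr 2 with t
  ring_nf

theorem IntervalIntegrable.comp_unitInterval {F : ℝ → E} {a b : ℝ}
    (hF : IntervalIntegrable F volume a b) :
    IntervalIntegrable (fun t => F (t * a + (1 - t) * b)) volume 0 1 := by
  rcases eq_or_ne a b with rfl | hab
  · simp_rw [← add_mul, add_sub_cancel, one_mul]
    exact intervalIntegrable_const
  have h := (hF.comp_add_right b).comp_mul_left (c := a - b)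
  simp only [sub_self, div_self (sub_ne_zero.2 hab), zero_div] at h
  convert h.symm using 2 with t
  ring_nf

end ChangeOfVariables

def HLogConvexOn (h : ℝ → ℝ) (s : Set ℝ) (f : ℝ → ℝ) : Prop :=
  ∀ x ∈ s, ∀ y ∈ s, ∀ t ∈ Icc (0:ℝ) 1, f (t * x + (1 - t) * y) ≤ f x ^ h t * f y ^ h (1 - t)

namespace HLogConvexOn

variable {h f g : ℝ → ℝ} {s : Set ℝ}

theorem mul (hs : Convex ℝ s) (hf₀ : ∀ x ∈ s, 0 ≤ f x) (hg₀ : ∀ x ∈ s, 0 ≤ g x)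
    (hf : HLogConvexOn h s f) (hg : HLogConvexOn h s g) :
    HLogConvexOn h s fun x => f x * g x := by
  intro x hx y hy t ht
  have hz : t * x + (1 - t) * y ∈ s := hs hx hy ht.1 (sub_nonneg.2 ht.2) (by ring)
  calc f (t * x + (1 - t) * y) * g (t * x + (1 - t) * y)
      ≤ (f x ^ h t * f y ^ h (1 - t)) * (g x ^ h t * g y ^ h (1 - t)) :=
        mul_le_mul (hf x hx y hy t ht) (hg x hx y hy t ht) (hg₀ _ hz)
          (mul_nonneg (Real.rpow_nonneg (hf₀ x hx) _) (Real.rpow_nonneg (hf₀ y hy) _))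
    _ = (f x * g x) ^ h t * (f y * g y) ^ h (1 - t) := by
        rw [Real.mul_rpow (hf₀ x hx) (hg₀ x hx), Real.mul_rpow (hf₀ y hy) (hg₀ y hy)]
        ring

theorem le_mul_rpow_of_symm (hf : HLogConvexOn h s f)
    (hsymm : ∀ t ∈ Icc (0:ℝ) 1, h t = h (1 - t)) {x y : ℝ} (hx : x ∈ s) (hy : y ∈ s) (hfx : 0 ≤ f x) (hfy : 0 ≤ f y) {t : ℝ}
    (ht : t ∈ Icc (0:ℝ) 1) :
    f (t * x + (1 - t) * y) ≤ (f x * f y) ^ h t :=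
  (hf x hx y hy t ht).trans_eq (by rw [Real.mul_rpow hfx hfy, ← hsymm t ht])

theorem average_le_integral_rpow {a b : ℝ} (hab : a < b) (hf : HLogConvexOn h (Icc a b) f)
    (hsymm : ∀ t ∈ Icc (0:ℝ) 1, h t = h (1 - t)) (hfa : 0 ≤ f a) (hfb : 0 ≤ f b)
    (hint : IntervalIntegrable f volume a b)
    (hint_rpow : IntervalIntegrable (fun t => (f a * f b) ^ h t) volume 0 1) :
    (1 / (b - a)) * ∫ x in a..b, f x ≤ ∫ t in (0:ℝ)..1, (f a * f b) ^ h t := by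
  have ha : a ∈ Icc a b := left_mem_Icc.2 hab.le
  have hb : b ∈ Icc a b := right_mem_Icc.2 hab.le
  rw [intervalIntegral.integral_eq_sub_smul_integral_unitInterval, smul_eq_mul,
    one_div, inv_mul_cancel_left₀ (sub_ne_zero.2 hab.ne')]
  exact intervalIntegral.integral_mono_on zero_le_one hint.comp_unitInterval hint_rpow
    fun t ht => hf.le_mul_rpow_of_symm hsymm ha hb hfa hfb ht

end HLogConvexOn

theorem h_log_convex_product_hadamard_general
    (a b : ℝ) (hab : a < b) (h f g : ℝ → ℝ)
    (hsymm : ∀ t ∈ Icc (0:ℝ) 1, h t = h (1 - t))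
    (hf : ∀ x ∈ Icc a b, 0 < f x)
    (hg : ∀ x ∈ Icc a b, 0 < g x)
    (hlcf : ∀ x ∈ Icc a b, ∀ y ∈ Icc a b, ∀ t ∈ Icc (0:ℝ) 1,
      f (t * x + (1 - t) * y) ≤ f x ^ h t * f y ^ h (1 - t))
    (hlcg : ∀ x ∈ Icc a b, ∀ y ∈ Icc a b, ∀ t ∈ Icc (0:ℝ) 1,
      g (t * x + (1 - t) * y) ≤ g x ^ h t * g y ^ h (1 - t))
    (hint1 : IntervalIntegrable (fun x => f x * g x) volume a b)
    (hint2 : IntervalIntegrable (fun t => (f a * g a * (f b * g b)) ^ h t) volume 0 1) :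
    (1 / (b - a)) * ∫ x in a..b, f x * g x ≤
      ∫ t in (0:ℝ)..1, (f a * g a * (f b * g b)) ^ h t := by
  have hfg : HLogConvexOn h (Icc a b) fun x => f x * g x :=
    HLogConvexOn.mul (convex_Icc a b) (fun x hx => (hf x hx).le) (fun x hx => (hg x hx).le)
      hlcf hlcg
  have hpos : ∀ x ∈ Icc a b, 0 ≤ f x * g x := fun x hx => (mul_pos (hf x hx) (hg x hx)).le
  exact hfg.average_le_integral_rpow hab hsymm (hpos a (left_mem_Icc.2 hab.le))
    (hpos b (right_mem_Icc.2 hab.le)) hint1 hint2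

/-- For `h` nonnegative on `[0,1]` and symmetric about `1/2`, and `f`, `g`
positive `h`-logarithmically convex functions on `[a,b]`, one has
`(1/(b-a)) ∫ₐᵇ f(x) g(x) dx ≤ ∫₀¹ (f(a)g(a) f(b)g(b)) ^ h(t) dt`. -/
theorem h_log_convex_product_hadamard
    (a b : ℝ) (hab : a < b) (h f g : ℝ → ℝ)
    (hh : ∀ t ∈ Icc (0:ℝ) 1, 0 ≤ h t)
    (hsymm : ∀ t ∈ Icc (0:ℝ) 1, h t = h (1 - t))
    (hf : ∀ x ∈ Icc a b, 0 < f x)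
    (hg : ∀ x ∈ Icc a b, 0 < g x)
    (hlcf : ∀ x ∈ Icc a b, ∀ y ∈ Icc a b, ∀ t ∈ Icc (0:ℝ) 1,
      f (t * x + (1 - t) * y) ≤ f x ^ h t * f y ^ h (1 - t))
    (hlcg : ∀ x ∈ Icc a b, ∀ y ∈ Icc a b, ∀ t ∈ Icc (0:ℝ) 1,
      g (t * x + (1 - t) * y) ≤ g x ^ h t * g y ^ h (1 - t))
    (hint1 : IntervalIntegrable (fun x => f x * g x) volume a b)
    (hint2 : IntervalIntegrable (fun t => (f a * g a * (f b * g b)) ^ h t) volume 0 1) :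
    (1 / (b - a)) * ∫ x in a..b, f x * g x ≤
      ∫ t in (0:ℝ)..1, (f a * g a * (f b * g b)) ^ h t :=
  h_log_convex_product_hadamard_general a b hab h f g hsymm hf hg hlcf hlcg hint1 hint2
end

section
/- Let a < b, let h be a nonnegative function on an interval J ⊇ [0,1], let f, g : [a,b] → ℝ be positive h-logarithmically convex functions with fg integrable on [a,b], and let α, β > 0 with α + β = 1. If the function t ↦ α·([f(a)]^{h(t)}[f(b)]^{h(1-t)})^{1/α} + β·([g(a)]^{h(t)}[g(b)]^{h(1-t)})^{1/β} is integrable on [0,1], then (1/(b-a)) ∫_a^b f(x)g(x) dx ≤ ∫_0^1 [ α·([f(a)]^{h(t)}[f(b)]^{h(1-t)})^{1/α} + β·([g(a)]^{h(t)}[g(b)]^{h(1-t)})^{1/β} ] dt. -/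
/-!
Substituting `x = t a + (1 - t) b` turns the mean of `f g` over `[a, b]` into
`∫₀¹ f(t a + (1 - t) b) g(t a + (1 - t) b) dt`. By `h`-logarithmic convexity each factor is at most
`[f(a)]^{h(t)} [f(b)]^{h(1-t)}` (resp. for `g`), and Young's inequality bounds the product of
these two bounds pointwise by the integrand on the right.
-/

open Set MeasureTheory

theorem Real.mul_le_weighted_add_rpow_inv {c d α β : ℝ} (hc : 0 ≤ c) (hd : 0 ≤ d)
    (hα : 0 < α) (hβ : 0 < β) (hαβ : α + β = 1) :
    c * d ≤ α * c ^ (1 / α) + β * d ^ (1 / β) := by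
  have hcα : (c ^ (1 / α)) ^ α = c := by
    rw [← Real.rpow_mul hc, one_div_mul_cancel hα.ne', Real.rpow_one]
  have hdβ : (d ^ (1 / β)) ^ β = d := by
    rw [← Real.rpow_mul hd, one_div_mul_cancel hβ.ne', Real.rpow_one]
  calc c * d = (c ^ (1 / α)) ^ α * (d ^ (1 / β)) ^ β := by rw [hcα, hdβ]
    _ ≤ α * c ^ (1 / α) + β * d ^ (1 / β) :=
      Real.geom_mean_le_arith_mean2_weighted hα.le hβ.le (by positivity) (by positivity) hαβ

namespace intervalIntegral

theorem integral_comp_convex_combination {E : Type*} [NormedAddCommGroup E] [NormedSpace ℝ E]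
    {a b : ℝ} (hab : a ≠ b) (φ : ℝ → E) :
    ∫ t in (0 : ℝ)..1, φ (t * a + (1 - t) * b) = (b - a)⁻¹ • ∫ x in a..b, φ x := by
  have hc : a - b ≠ 0 := sub_ne_zero.mpr hab
  calc ∫ t in (0 : ℝ)..1, φ (t * a + (1 - t) * b)
      = ∫ t in (0 : ℝ)..1, φ ((a - b) * t + b) := by congr 1; ext t; ring_nf
    _ = (a - b)⁻¹ • ∫ x in b..a, φ x := by rw [integral_comp_mul_add φ hc]; simp
    _ = (b - a)⁻¹ • ∫ x in a..b, φ x := by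
      rw [integral_symm, smul_neg, ← neg_smul, ← inv_neg, neg_sub]

end intervalIntegral

theorem IntervalIntegrable.comp_convex_combination {E : Type*} [NormedAddCommGroup E]
    {φ : ℝ → E} {a b : ℝ} (hφ : IntervalIntegrable φ volume a b) :
    IntervalIntegrable (fun t => φ (t * a + (1 - t) * b)) volume 0 1 := by
  by_cases hab : a = b
  · subst hab
    have hconst : (fun t : ℝ => φ (t * a + (1 - t) * a)) = fun _ => φ a := by
      ext t; rw [← add_mul, add_sub_cancel, one_mul]
    rw [hconst]
    exact intervalIntegrable_const
  have h := (hφ.comp_add_right b).comp_mul_left (c := a - b)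
  simp only [sub_self, div_self (sub_ne_zero.mpr hab), zero_div] at h
  exact h.symm.congr fun t _ => by ring_nf

theorem h_log_convex_product_young_split_general
    (a b : ℝ) (hab : a < b) (h f g : ℝ → ℝ) (α β : ℝ)
    (hα : 0 < α) (hβ : 0 < β) (hαβ : α + β = 1)
    (hf : ∀ x ∈ Icc a b, 0 < f x)
    (hg : ∀ x ∈ Icc a b, 0 < g x)
    (hlcf : ∀ x ∈ Icc a b, ∀ y ∈ Icc a b, ∀ t ∈ Icc (0:ℝ) 1,
      f (t * x + (1 - t) * y) ≤ f x ^ h t * f y ^ h (1 - t))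
    (hlcg : ∀ x ∈ Icc a b, ∀ y ∈ Icc a b, ∀ t ∈ Icc (0:ℝ) 1,
      g (t * x + (1 - t) * y) ≤ g x ^ h t * g y ^ h (1 - t))
    (hint1 : IntervalIntegrable (fun x => f x * g x) volume a b)
    (hint2 : IntervalIntegrable
      (fun t => α * (f a ^ h t * f b ^ h (1 - t)) ^ (1 / α) +
                β * (g a ^ h t * g b ^ h (1 - t)) ^ (1 / β)) volume 0 1) :
    (1 / (b - a)) * ∫ x in a..b, f x * g x ≤
      ∫ t in (0:ℝ)..1,
        (α * (f a ^ h t * f b ^ h (1 - t)) ^ (1 / α) +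
         β * (g a ^ h t * g b ^ h (1 - t)) ^ (1 / β)) := by
  have ha : a ∈ Icc a b := left_mem_Icc.mpr hab.le
  have hb : b ∈ Icc a b := right_mem_Icc.mpr hab.le
  rw [one_div, ← smul_eq_mul, ← intervalIntegral.integral_comp_convex_combination hab.ne]
  refine intervalIntegral.integral_mono_on zero_le_one hint1.comp_convex_combination hint2
    fun t ht => ?_
  have hx : t * a + (1 - t) * b ∈ Icc a b := by
    constructor <;> nlinarith [ht.1, ht.2]
  have hFnn : 0 ≤ f a ^ h t * f b ^ h (1 - t) := by
    have := hf a ha; have := hf b hb; positivity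
  have hGnn : 0 ≤ g a ^ h t * g b ^ h (1 - t) := by
    have := hg a ha; have := hg b hb; positivity
  calc f (t * a + (1 - t) * b) * g (t * a + (1 - t) * b)
      ≤ (f a ^ h t * f b ^ h (1 - t)) * (g a ^ h t * g b ^ h (1 - t)) :=
        mul_le_mul (hlcf a ha b hb t ht) (hlcg a ha b hb t ht) (hg _ hx).le hFnn
    _ ≤ _ := Real.mul_le_weighted_add_rpow_inv hFnn hGnn hα hβ hαβ

/-- Young-type bound for the product of two positive `h`-logarithmically
convex functions on `[a,b]`. -/
theorem h_log_convex_product_young_split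
    (a b : ℝ) (hab : a < b) (h f g : ℝ → ℝ) (α β : ℝ)
    (hα : 0 < α) (hβ : 0 < β) (hαβ : α + β = 1)
    (hh : ∀ t ∈ Icc (0:ℝ) 1, 0 ≤ h t)
    (hf : ∀ x ∈ Icc a b, 0 < f x)
    (hg : ∀ x ∈ Icc a b, 0 < g x)
    (hlcf : ∀ x ∈ Icc a b, ∀ y ∈ Icc a b, ∀ t ∈ Icc (0:ℝ) 1,
      f (t * x + (1 - t) * y) ≤ f x ^ h t * f y ^ h (1 - t))
    (hlcg : ∀ x ∈ Icc a b, ∀ y ∈ Icc a b, ∀ t ∈ Icc (0:ℝ) 1,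
      g (t * x + (1 - t) * y) ≤ g x ^ h t * g y ^ h (1 - t))
    (hint1 : IntervalIntegrable (fun x => f x * g x) volume a b)
    (hint2 : IntervalIntegrable
      (fun t => α * (f a ^ h t * f b ^ h (1 - t)) ^ (1 / α) +
                β * (g a ^ h t * g b ^ h (1 - t)) ^ (1 / β)) volume 0 1) :
    (1 / (b - a)) * ∫ x in a..b, f x * g x ≤
      ∫ t in (0:ℝ)..1,
        (α * (f a ^ h t * f b ^ h (1 - t)) ^ (1 / α) +
         β * (g a ^ h t * g b ^ h (1 - t)) ^ (1 / β)) :=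
  h_log_convex_product_young_split_general a b hab h f g α β hα hβ hαβ hf hg hlcf hlcg hint1 hint2
end

section
/- Let I = [a,b] ⊂ (0,∞), let h be a nonnegative function on an interval J ⊇ [0,1], and let f : I → (0,∞) be an h-geometrically convex function which is monotonically decreasing on I. Then f is h-logarithmically convex on I, i.e. f(tx+(1-t)y) ≤ [f(x)]^{h(t)} · [f(y)]^{h(1-t)} for all x,y ∈ I and t ∈ [0,1]. -/
open Set

theorem rpow_mul_rpow_one_sub_mem_Icc {a b x y t : ℝ} (ha : 0 ≤ a) (hx : x ∈ Icc a b)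
    (hy : y ∈ Icc a b) (ht : t ∈ Icc (0:ℝ) 1) : x ^ t * y ^ (1 - t) ∈ Icc a b := by
  obtain ⟨ht0, ht1⟩ := ht
  have ht1' : 0 ≤ 1 - t := sub_nonneg.mpr ht1
  have self_eq (c : ℝ) (hc : 0 ≤ c) : c ^ t * c ^ (1 - t) = c := by
    rw [← Real.rpow_add' hc (by norm_num), add_sub_cancel, Real.rpow_one]
  have hx0 : 0 ≤ x := ha.trans hx.1
  have hy0 : 0 ≤ y := ha.trans hy.1
  have hb0 : 0 ≤ b := hx0.trans hx.2
  constructor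
  · calc a = a ^ t * a ^ (1 - t) := (self_eq a ha).symm
      _ ≤ x ^ t * y ^ (1 - t) := by gcongr; exacts [hx.1, hy.1]
  · calc x ^ t * y ^ (1 - t) ≤ b ^ t * b ^ (1 - t) := by gcongr; exacts [hx.2, hy.2]
      _ = b := self_eq b hb0

theorem h_log_convex_of_h_geom_convex_antitone_general
    (a b : ℝ) (ha : 0 < a) (h f : ℝ → ℝ)
    (hgc : ∀ x ∈ Icc a b, ∀ y ∈ Icc a b, ∀ t ∈ Icc (0:ℝ) 1,
      f (x ^ t * y ^ (1 - t)) ≤ f x ^ h t * f y ^ h (1 - t))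
    (hdec : ∀ x ∈ Icc a b, ∀ y ∈ Icc a b, x ≤ y → f y ≤ f x) :
    ∀ x ∈ Icc a b, ∀ y ∈ Icc a b, ∀ t ∈ Icc (0:ℝ) 1,
      f (t * x + (1 - t) * y) ≤ f x ^ h t * f y ^ h (1 - t) := by
  intro x hx y hy t ht
  have ht1 : 0 ≤ 1 - t := sub_nonneg.mpr ht.2
  have hgeom_mem := rpow_mul_rpow_one_sub_mem_Icc ha.le hx hy ht
  have harith_mem : t * x + (1 - t) * y ∈ Icc a b :=
    convex_Icc a b hx hy ht.1 ht1 (add_sub_cancel t 1)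
  have hamgm : x ^ t * y ^ (1 - t) ≤ t * x + (1 - t) * y :=
    Real.geom_mean_le_arith_mean2_weighted ht.1 ht1 (ha.le.trans hx.1) (ha.le.trans hy.1)
      (add_sub_cancel t 1)
  calc f (t * x + (1 - t) * y) ≤ f (x ^ t * y ^ (1 - t)) :=
        hdec _ hgeom_mem _ harith_mem hamgm
    _ ≤ f x ^ h t * f y ^ h (1 - t) := hgc x hx y hy t ht

/-- A decreasing `h`-geometrically convex function on `[a,b] ⊂ (0,∞)`
is `h`-logarithmically convex. -/
theorem h_log_convex_of_h_geom_convex_antitone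
    (a b : ℝ) (ha : 0 < a) (hab : a ≤ b) (h f : ℝ → ℝ)
    (hh : ∀ t ∈ Icc (0:ℝ) 1, 0 ≤ h t)
    (hf : ∀ x ∈ Icc a b, 0 < f x)
    (hgc : ∀ x ∈ Icc a b, ∀ y ∈ Icc a b, ∀ t ∈ Icc (0:ℝ) 1,
      f (x ^ t * y ^ (1 - t)) ≤ f x ^ h t * f y ^ h (1 - t))
    (hdec : ∀ x ∈ Icc a b, ∀ y ∈ Icc a b, x ≤ y → f y ≤ f x) :
    ∀ x ∈ Icc a b, ∀ y ∈ Icc a b, ∀ t ∈ Icc (0:ℝ) 1,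
      f (t * x + (1 - t) * y) ≤ f x ^ h t * f y ^ h (1 - t) :=
  h_log_convex_of_h_geom_convex_antitone_general a b ha h f hgc hdec
end

section
/- Let I ⊂ (0,∞) be an interval, let h be a nonnegative function on an interval J ⊇ [0,1], and let f : I → (0,∞) be an h-geometrically convex function. Let x, y ∈ I with 0 < x < y, and assume the function γ ↦ f(γ)·f(xy/γ)/γ is integrable on [x,y] and the function t ↦ [f(x)f(y)]^{h(t)+h(1-t)} is integrable on [0,1]. Then (1/(ln y − ln x)) ∫_x^y f(γ)·f(xy/γ) · (dγ/γ) ≤ ∫_0^1 [f(x)·f(y)]^{h(t)+h(1-t)} dt. -/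
/-!
The substitution `γ = x ^ (1 - t) * y ^ t`, i.e. `log γ` affine in `t`, turns `dγ / γ` into
`(log y - log x) dt` and `x * y / γ` into `x ^ t * y ^ (1 - t)`. Applying `h`-geometric convexity
at `1 - t` and at `t` bounds the product of the two values of `f` by
`(f x * f y) ^ (h t + h (1 - t))`, and a nonnegative function dominated by an integrable one has
the smaller integral.
-/

open Set MeasureTheory

def HGeomConvexOn (I : Set ℝ) (h f : ℝ → ℝ) : Prop :=
  ∀ x ∈ I, ∀ y ∈ I, ∀ t ∈ Icc (0:ℝ) 1, f (x ^ t * y ^ (1 - t)) ≤ f x ^ h t * f y ^ h (1 - t)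

namespace Real

theorem integral_comp_exp_eq_integral_inv_smul {E : Type*} [NormedAddCommGroup E]
    [NormedSpace ℝ E] (F : ℝ → E) {a b : ℝ} (hab : a ≤ b) :
    ∫ u in a..b, F (exp u) = ∫ γ in exp a..exp b, γ⁻¹ • F γ := by
  rw [intervalIntegral.integral_of_le hab, intervalIntegral.integral_of_le (exp_le_exp.2 hab),
    ← integral_Icc_eq_integral_Ioc, ← integral_Icc_eq_integral_Ioc, ← image_exp_Icc,
    integral_image_eq_integral_abs_deriv_smul measurableSet_Icc
      (fun u _ ↦ (hasDerivAt_exp u).hasDerivWithinAt) exp_injective.injOn]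
  refine setIntegral_congr_fun measurableSet_Icc fun u _ ↦ ?_
  rw [abs_of_pos (exp_pos u), smul_smul, mul_inv_cancel₀ (exp_pos u).ne', one_smul]

theorem exp_log_add_mul_sub_log {x y : ℝ} (hx : 0 < x) (hy : 0 < y) (t : ℝ) :
    exp (log x + (log y - log x) * t) = x ^ (1 - t) * y ^ t := by
  rw [rpow_def_of_pos hx, rpow_def_of_pos hy, ← exp_add]
  ring_nf

theorem integral_div_self_eq_mul_integral_rpow {x y : ℝ} (hx : 0 < x) (hxy : x ≤ y)
    (F : ℝ → ℝ) :
    ∫ γ in x..y, F γ / γ = (log y - log x) * ∫ t in (0:ℝ)..1, F (x ^ (1 - t) * y ^ t) := by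
  have hy := hx.trans_le hxy
  have hlinear := intervalIntegral.smul_integral_comp_add_mul (a := 0) (b := 1)
    (fun u ↦ F (exp u)) (log y - log x) (log x)
  simp only [mul_zero, add_zero, mul_one, add_sub_cancel, exp_log_add_mul_sub_log hx hy,
    smul_eq_mul] at hlinear
  rw [hlinear, integral_comp_exp_eq_integral_inv_smul F (log_le_log hx hxy), exp_log hx,
    exp_log hy]
  simp only [smul_eq_mul, inv_mul_eq_div]

theorem rpow_one_sub_mul_rpow_mem_Icc {x y t : ℝ} (hx : 0 < x) (hxy : x ≤ y)
    (ht : t ∈ Icc (0:ℝ) 1) : x ^ (1 - t) * y ^ t ∈ Icc x y := by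
  have hy := hx.trans_le hxy
  have := ht.1
  have : 0 ≤ 1 - t := sub_nonneg.2 ht.2
  constructor
  · calc x = x ^ (1 - t) * x ^ t := by rw [← rpow_add hx, sub_add_cancel, rpow_one]
      _ ≤ x ^ (1 - t) * y ^ t := by gcongr
  · calc x ^ (1 - t) * y ^ t ≤ y ^ (1 - t) * y ^ t := by gcongr
      _ = y := by rw [← rpow_add hy, sub_add_cancel, rpow_one]

theorem mul_div_rpow_one_sub_mul_rpow {x y : ℝ} (hx : 0 < x) (hy : 0 < y) (t : ℝ) :
    x * y / (x ^ (1 - t) * y ^ t) = x ^ t * y ^ (1 - t) := by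
  rw [rpow_sub hx, rpow_sub hy, rpow_one, rpow_one]
  have := rpow_pos_of_pos hx t
  have := rpow_pos_of_pos hy t
  field_simp

end Real

theorem HGeomConvexOn.apply_mul_apply_le {I : Set ℝ} {h f : ℝ → ℝ} (hgc : HGeomConvexOn I h f)
    {x y t : ℝ} (hx : x ∈ I) (hy : y ∈ I) (ht : t ∈ Icc (0:ℝ) 1) (hfx : 0 < f x)
    (hfy : 0 < f y) (hft : 0 ≤ f (x ^ t * y ^ (1 - t))) :
    f (x ^ (1 - t) * y ^ t) * f (x ^ t * y ^ (1 - t)) ≤ (f x * f y) ^ (h t + h (1 - t)) := by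
  have ht' : 1 - t ∈ Icc (0:ℝ) 1 := ⟨sub_nonneg.2 ht.2, sub_le_self _ ht.1⟩
  have hle := hgc x hx y hy (1 - t) ht'
  rw [sub_sub_cancel] at hle
  calc f (x ^ (1 - t) * y ^ t) * f (x ^ t * y ^ (1 - t))
      ≤ (f x ^ h (1 - t) * f y ^ h t) * (f x ^ h t * f y ^ h (1 - t)) := by
        gcongr
        exact hgc x hx y hy t ht
    _ = (f x * f y) ^ (h t + h (1 - t)) := by
        rw [Real.mul_rpow hfx.le hfy.le, Real.rpow_add hfx, Real.rpow_add hfy]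
        ring

theorem h_geom_convex_product_integral_bound_general
    (I : Set ℝ) (hIconv : Convex ℝ I)
    (h f : ℝ → ℝ)
    (hf : ∀ x ∈ I, 0 < f x)
    (hgc : ∀ x ∈ I, ∀ y ∈ I, ∀ t ∈ Icc (0:ℝ) 1,
      f (x ^ t * y ^ (1 - t)) ≤ f x ^ h t * f y ^ h (1 - t))
    (x y : ℝ) (hx : x ∈ I) (hy : y ∈ I) (hxpos : 0 < x) (hxy : x < y)
    (hint2 : IntervalIntegrable (fun t => (f x * f y) ^ (h t + h (1 - t))) volume 0 1) :
    (1 / (Real.log y - Real.log x)) * ∫ γ in x..y, f γ * f (x * y / γ) / γ ≤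
      ∫ t in (0:ℝ)..1, (f x * f y) ^ (h t + h (1 - t)) := by
  have hypos := hxpos.trans hxy
  have hlog : 0 < Real.log y - Real.log x := sub_pos.2 (Real.log_lt_log hxpos hxy)
  have hmem : ∀ t ∈ Icc (0:ℝ) 1, x ^ (1 - t) * y ^ t ∈ I := fun t ht ↦
    hIconv.ordConnected.out hx hy (Real.rpow_one_sub_mul_rpow_mem_Icc hxpos hxy.le ht)
  have hmem_swap : ∀ t ∈ Icc (0:ℝ) 1, x ^ t * y ^ (1 - t) ∈ I := fun t ht ↦ by
    simpa only [sub_sub_cancel] using hmem (1 - t) ⟨sub_nonneg.2 ht.2, sub_le_self _ ht.1⟩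
  rw [Real.integral_div_self_eq_mul_integral_rpow hxpos hxy.le, ← mul_assoc,
    one_div_mul_cancel hlog.ne', one_mul, intervalIntegral.integral_of_le zero_le_one,
    intervalIntegral.integral_of_le zero_le_one]
  refine setIntegral_mono_of_nonneg (fun t ht ↦ ?_) (fun t ht ↦ ?_) hint2.1 <;>
    replace ht := Ioc_subset_Icc_self ht <;>
    rw [Real.mul_div_rpow_one_sub_mul_rpow hxpos hypos]
  · exact mul_nonneg (hf _ (hmem t ht)).le (hf _ (hmem_swap t ht)).le
  · exact HGeomConvexOn.apply_mul_apply_le hgc hx hy ht (hf x hx) (hf y hy)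
      (hf _ (hmem_swap t ht)).le

/-- Hadamard-type inequality for an `h`-geometrically convex function on an
interval `I ⊂ (0,∞)`. -/
theorem h_geom_convex_product_integral_bound
    (I : Set ℝ) (hI : I ⊆ Ioi (0:ℝ)) (hIconv : Convex ℝ I)
    (h f : ℝ → ℝ)
    (hh : ∀ t ∈ Icc (0:ℝ) 1, 0 ≤ h t)
    (hf : ∀ x ∈ I, 0 < f x)
    (hgc : ∀ x ∈ I, ∀ y ∈ I, ∀ t ∈ Icc (0:ℝ) 1,
      f (x ^ t * y ^ (1 - t)) ≤ f x ^ h t * f y ^ h (1 - t))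
    (x y : ℝ) (hx : x ∈ I) (hy : y ∈ I) (hxpos : 0 < x) (hxy : x < y)
    (hint1 : IntervalIntegrable (fun γ => f γ * f (x * y / γ) / γ) volume x y)
    (hint2 : IntervalIntegrable (fun t => (f x * f y) ^ (h t + h (1 - t))) volume 0 1) :
    (1 / (Real.log y - Real.log x)) * ∫ γ in x..y, f γ * f (x * y / γ) / γ ≤
      ∫ t in (0:ℝ)..1, (f x * f y) ^ (h t + h (1 - t)) :=
  h_geom_convex_product_integral_bound_general I hIconv h f hf hgc x y hx hy hxpos hxy hint2
end
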